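/- O(1/k) iteration complexity of iBPG at the last iterate: under the standing assumptions, if Σ_k k·η_k(‖x̃^{k+1}‖+‖x̃^k‖+1) < ∞, Σ_k k·μ_k < ∞, Σ_k k·ν_k < ∞, and the problem inf{F(x) : x ∈ Q} has an optimal solution x* ∈ dom φ, then there exists a constant C ≥ 0 such that F(x̃^k) − F* ≤ C/k for all k ≥ 1. -/

import Mathlib

/-!
Combining the `ν`-subgradient inequality for `P`, relative smoothness and convexity of `f`, and
the three-point identity of the Bregman distance gives, for every `u ∈ dom P ∩ dom φ`,
`F(x̃ᵏ⁺¹) ≤ F(u) + L D(u, xᵏ) - L D(u, xᵏ⁺¹) + errorₖ`.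
With `u = x*` this telescopes, so the partial sums of `F(x̃ʲ) - F*` stay bounded; with `u = x̃ᵏ`
it makes `F(x̃ᵏ)` nonincreasing up to errors whose `k`-weighted sums are finite, so
`k (F(x̃ᵏ) - F*)` is bounded by such a partial sum plus a constant.
-/

open Filter Topology RealInnerProductSpace

/-- The Bregman distance associated with the kernel `φ` whose gradient map is `gφ`. -/
noncomputable def breg {E : Type*} [NormedAddCommGroup E] [InnerProductSpace ℝ E]
    (φ : E → ℝ) (gφ : E → E) (x y : E) : ℝ :=
  φ x - φ y - ⟪gφ y, x - y⟫

/-- The ν-subdifferential of `P` (a proper function with effective domain `domP`) at `x`. -/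
def nuSubdiff {E : Type*} [NormedAddCommGroup E] [InnerProductSpace ℝ E]
    (P : E → ℝ) (domP : Set E) (ν : ℝ) (x : E) : Set E :=
  {d : E | ∀ u ∈ domP, P x + ⟪d, u - x⟫ - ν ≤ P u}

open Classical in
noncomputable def extFun {E : Type*} (g : E → ℝ) (dom : Set E) : E → EReal :=
  fun x => if x ∈ dom then (g x : EReal) else ⊤

/-- `φ` (with effective domain `domφ` and gradient map `gφ`) is essentially smooth. -/
def EssentiallySmooth {E : Type*} [NormedAddCommGroup E] [InnerProductSpace ℝ E]
    [FiniteDimensional ℝ E] (φ : E → ℝ) (domφ : Set E) (gφ : E → E) : Prop :=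
  (interior domφ).Nonempty ∧
  (∀ x ∈ interior domφ, HasGradientAt φ (gφ x) x) ∧
  ∀ (u : ℕ → E) (u₀ : E), (∀ n, u n ∈ interior domφ) →
    Tendsto u atTop (𝓝 u₀) → u₀ ∈ frontier (interior domφ) →
    Tendsto (fun n => ‖gφ (u n)‖) atTop atTop

/-- The standing assumptions (Assumption A) for the problem `inf {P x + f x : x ∈ Q}`. -/
structure Standing {E : Type*} [NormedAddCommGroup E] [InnerProductSpace ℝ E]
    [FiniteDimensional ℝ E] (Q domφ domP domf X : Set E)
    (φ P f : E → ℝ) (gφ gf : E → E) (L : ℝ) : Prop where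
  hQclosed : IsClosed Q
  hQconv : Convex ℝ Q
  hQint : (interior Q).Nonempty
  hφconv : ConvexOn ℝ domφ φ
  hφstrict : StrictConvexOn ℝ (interior domφ) φ
  hφsmooth : EssentiallySmooth φ domφ gφ
  hφQ : closure domφ = Q
  hPne : domP.Nonempty
  hPconv : ConvexOn ℝ domP P
  hPclosed : LowerSemicontinuous (extFun P domP)
  hPQ : (domP ∩ interior Q).Nonempty
  hfconv : ConvexOn ℝ domf f
  hfclosed : LowerSemicontinuous (extFun f domf)
  hfdom : domφ ⊆ domf
  hfgrad : ∀ x ∈ interior domφ, HasGradientAt f (gf x) x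
  hXclosed : IsClosed X
  hXconv : Convex ℝ X
  hXsup : domP ∩ domφ ⊆ X
  hLnn : 0 ≤ L
  hrel : ∀ u ∈ interior domφ ∩ X, ∀ v ∈ domφ ∩ X,
    f v ≤ f u + ⟪gf u, v - u⟫ + L * breg φ gφ v u

/-- The iBPG iterates with inexactness tolerance sequences `η`, `μ`, `ν`. -/
structure IBPGIter {E : Type*} [NormedAddCommGroup E] [InnerProductSpace ℝ E]
    [FiniteDimensional ℝ E] (domφ domP X : Set E) (φ P : E → ℝ) (gφ gf : E → E) (L : ℝ)
    (η μ ν : ℕ → ℝ) (x xt : ℕ → E) : Prop where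
  hη : ∀ k, 0 ≤ η k
  hμ : ∀ k, 0 ≤ μ k
  hν : ∀ k, 0 ≤ ν k
  hx : ∀ k, x k ∈ X ∩ interior domφ
  hxt : ∀ k, xt k ∈ domP ∩ domφ
  hinex : ∀ k, ∃ d ∈ nuSubdiff P domP (ν k) (xt (k+1)),
    ‖d + gf (x k) + L • (gφ (x (k+1)) - gφ (x k))‖ ≤ η k
  hdist : ∀ k, breg φ gφ (xt (k+1)) (x (k+1)) ≤ μ k

section Convexity

variable {E : Type*} [NormedAddCommGroup E] [InnerProductSpace ℝ E] [CompleteSpace E]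

theorem ConvexOn.add_inner_le_of_hasGradientAt {s : Set E} {g : E → ℝ} (hg : ConvexOn ℝ s g)
    {x u g' : E} (hx : x ∈ s) (hu : u ∈ s) (hd : HasGradientAt g g' x) :
    g x + ⟪g', u - x⟫ ≤ g u := by
  set ℓ : ℝ →ᵃ[ℝ] E := AffineMap.lineMap x u
  have hderiv : HasDerivAt (g ∘ ℓ) ⟪g', u - x⟫ 0 := by
    have hℓ : HasDerivAt ℓ (u - x) 0 := AffineMap.hasDerivAt_lineMap
    have hd' : HasFDerivAt g (InnerProductSpace.toDual ℝ E g') (ℓ 0) := by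
      simpa [ℓ] using hd.hasFDerivAt
    simpa using hd'.comp_hasDerivAt 0 hℓ
  have hslope := (hg.comp_affineMap ℓ).le_slope_of_hasDerivAt (x := 0) (y := 1)
    (by simpa [ℓ] using hx) (by simpa [ℓ] using hu) zero_lt_one hderiv
  simp only [slope, Function.comp, ℓ, AffineMap.lineMap_apply_zero, AffineMap.lineMap_apply_one,
    sub_zero, inv_one, one_smul, vsub_eq_sub] at hslope
  linarith

theorem breg_nonneg {s : Set E} {φ : E → ℝ} {gφ : E → E} (hφ : ConvexOn ℝ s φ) {y z : E}
    (hy : y ∈ s) (hz : z ∈ s) (hd : HasGradientAt φ (gφ y) y) : 0 ≤ breg φ gφ z y := by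
  have := hφ.add_inner_le_of_hasGradientAt hy hz hd
  rw [breg]
  linarith

end Convexity

theorem inner_sub_gradient_eq_breg {E : Type*} [NormedAddCommGroup E] [InnerProductSpace ℝ E]
    (φ : E → ℝ) (gφ : E → E) (a b c u : E) :
    ⟪gφ a - gφ b, u - c⟫ =
      breg φ gφ u b - breg φ gφ u a - breg φ gφ c b + breg φ gφ c a := by
  simp only [breg, inner_sub_left, inner_sub_right]
  ring

section Sequences

variable {c : ℕ → ℝ}

theorem Summable.of_nat_mul (hc : ∀ k, 0 ≤ c k) (h : Summable fun k : ℕ => (k : ℝ) * c k) :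
    Summable c := by
  rw [← summable_nat_add_iff 1]
  refine Summable.of_nonneg_of_le (fun k => hc (k + 1)) (fun k => ?_)
    ((summable_nat_add_iff 1).2 h)
  exact le_mul_of_one_le_left (hc (k + 1)) (by simp)

theorem Summable.nat_mul_comp_pred (hc : ∀ k, 0 ≤ c k)
    (h : Summable fun k : ℕ => (k : ℝ) * c k) : Summable fun k : ℕ => (k : ℝ) * c (k - 1) := by
  rw [← summable_nat_add_iff 1]
  simpa [add_mul] using h.add (h.of_nat_mul hc)

variable {a b ε δ : ℕ → ℝ}

theorem sum_le_of_telescoping (hb : ∀ k, 0 ≤ b k) (hε : ∀ k, 0 ≤ ε k) (hεs : Summable ε)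
    (hdesc : ∀ k, a (k + 1) ≤ b k - b (k + 1) + ε k) (n : ℕ) :
    ∑ j ∈ Finset.range n, a (j + 1) ≤ b 0 + ∑' k, ε k := by
  have htel : ∑ j ∈ Finset.range n, a (j + 1) + b n ≤ b 0 + ∑ j ∈ Finset.range n, ε j := by
    induction n with
    | zero => simp
    | succ n ih =>
      rw [Finset.sum_range_succ, Finset.sum_range_succ]
      linarith [hdesc n]
  linarith [hb n, hεs.sum_le_tsum (Finset.range n) fun k _ => hε k]

theorem nat_mul_le_sum_add_sum_of_le_add (hmono : ∀ k, 1 ≤ k → a (k + 1) ≤ a k + δ k)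
    {n : ℕ} (hn : 1 ≤ n) :
    n * a n ≤ ∑ j ∈ Finset.range n, a (j + 1) + ∑ i ∈ Finset.range n, (i : ℝ) * δ i := by
  induction n, hn using Nat.le_induction with
  | base => simp
  | succ n hn ih =>
    rw [Finset.sum_range_succ, Finset.sum_range_succ]
    have := mul_le_mul_of_nonneg_left (hmono n hn) n.cast_nonneg
    push_cast
    linarith

/-- The last-iterate rate: a summable telescoping bound controls the average of the `a k`, and
quasi-monotonicity (with weighted-summable defects) transfers it to the last term. -/
theorem exists_le_div_of_telescoping_of_le_add (hb : ∀ k, 0 ≤ b k) (hε : ∀ k, 0 ≤ ε k)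
    (hδ : ∀ k, 0 ≤ δ k) (hεs : Summable ε) (hδs : Summable fun k : ℕ => (k : ℝ) * δ k)
    (hdesc : ∀ k, a (k + 1) ≤ b k - b (k + 1) + ε k)
    (hmono : ∀ k, 1 ≤ k → a (k + 1) ≤ a k + δ k) :
    ∃ C, 0 ≤ C ∧ ∀ n : ℕ, 1 ≤ n → a n ≤ C / n := by
  have hkδ : ∀ k : ℕ, 0 ≤ (k : ℝ) * δ k := fun k => mul_nonneg k.cast_nonneg (hδ k)
  refine ⟨b 0 + ∑' k, ε k + ∑' k : ℕ, (k : ℝ) * δ k,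
    by linarith [hb 0, (tsum_nonneg hε : 0 ≤ ∑' k, ε k),
      (tsum_nonneg hkδ : 0 ≤ ∑' k : ℕ, (k : ℝ) * δ k)], fun n hn => ?_⟩
  rw [le_div_iff₀' (by exact_mod_cast hn)]
  linarith [nat_mul_le_sum_add_sum_of_le_add hmono hn, sum_le_of_telescoping hb hε hεs hdesc n,
    hδs.sum_le_tsum (Finset.range n) fun k _ => hkδ k]

end Sequences

section IBPG

variable {E : Type*} [NormedAddCommGroup E] [InnerProductSpace ℝ E] [FiniteDimensional ℝ E]
  {Q domφ domP domf X : Set E} {φ P f : E → ℝ} {gφ gf : E → E} {L : ℝ}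

namespace Standing

variable (hs : Standing Q domφ domP domf X φ P f gφ gf L)
include hs

theorem breg_nonneg_of_mem_interior {y z : E} (hy : y ∈ interior domφ) (hz : z ∈ domφ) :
    0 ≤ breg φ gφ z y :=
  breg_nonneg hs.hφconv (interior_subset hy) hz (hs.hφsmooth.2.1 y hy)

/-- The inner product carries the residual `Δᵏ = d + ∇f(xᵏ) + L (∇φ(xᵏ⁺¹) - ∇φ(xᵏ))` of the iBPG
subproblem, with `x = xᵏ`, `x' = xᵏ⁺¹`, `z = x̃ᵏ⁺¹`. -/
theorem objective_le_of_mem_nuSubdiff {x x' z u d : E} {ν : ℝ} (hx : x ∈ X ∩ interior domφ)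
    (hz : z ∈ domP ∩ domφ) (hu : u ∈ domP ∩ domφ) (hd : d ∈ nuSubdiff P domP ν z) :
    P z + f z ≤ P u + f u - ⟪d + gf x + L • (gφ x' - gφ x), u - z⟫
      + L * breg φ gφ u x - L * breg φ gφ u x' + L * breg φ gφ z x' + ν := by
  have hP := hd u hu.1
  have hsmooth := hs.hrel x ⟨hx.2, hx.1⟩ z ⟨hz.2, hs.hXsup hz⟩
  have hconv := hs.hfconv.add_inner_le_of_hasGradientAt (hs.hfdom (interior_subset hx.2))
    (hs.hfdom hu.2) (hs.hfgrad x hx.2)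
  have hsplit : ⟪gf x, z - x⟫ = ⟪gf x, u - x⟫ - ⟪gf x, u - z⟫ := by
    rw [← inner_sub_right, sub_sub_sub_cancel_left]
  rw [inner_add_left, inner_add_left, real_inner_smul_left,
    inner_sub_gradient_eq_breg φ gφ x' x z u]
  linarith

end Standing

namespace IBPGIter

variable {η μ ν : ℕ → ℝ} {x xt : ℕ → E}
  (hs : Standing Q domφ domP domf X φ P f gφ gf L)
  (hit : IBPGIter domφ domP X φ P gφ gf L η μ ν x xt)
include hs hit

theorem objective_le (k : ℕ) {u : E} (hu : u ∈ domP ∩ domφ) :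
    P (xt (k + 1)) + f (xt (k + 1)) ≤ P u + f u + L * breg φ gφ u (x k)
      - L * breg φ gφ u (x (k + 1)) + L * μ k + η k * (‖xt (k + 1)‖ + ‖u‖) + ν k := by
  obtain ⟨d, hd, hdη⟩ := hit.hinex k
  have hstep := hs.objective_le_of_mem_nuSubdiff (x' := x (k + 1)) (hit.hx k) (hit.hxt (k + 1))
    hu hd
  have hinner : -⟪d + gf (x k) + L • (gφ (x (k + 1)) - gφ (x k)), u - xt (k + 1)⟫
      ≤ η k * (‖xt (k + 1)‖ + ‖u‖) :=
    calc _ ≤ ‖d + gf (x k) + L • (gφ (x (k + 1)) - gφ (x k))‖ * ‖u - xt (k + 1)‖ :=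
          (neg_le_abs _).trans (abs_real_inner_le_norm _ _)
      _ ≤ η k * (‖xt (k + 1)‖ + ‖u‖) :=
          mul_le_mul hdη ((norm_sub_le _ _).trans_eq (add_comm _ _)) (norm_nonneg _) (hit.hη k)
  have hμ := mul_le_mul_of_nonneg_left (hit.hdist k) hs.hLnn
  linarith

theorem objective_le_of_mem (k : ℕ) {u : E} (hu : u ∈ domP ∩ domφ) :
    P (xt (k + 1)) + f (xt (k + 1)) ≤ P u + f u + L * breg φ gφ u (x k)
      - L * breg φ gφ u (x (k + 1))
      + (L * μ k + ν k + (1 + ‖u‖) * (η k * (‖xt (k + 1)‖ + ‖xt k‖ + 1))) := by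
  have hη : η k * (‖xt (k + 1)‖ + ‖u‖) ≤ (1 + ‖u‖) * (η k * (‖xt (k + 1)‖ + ‖xt k‖ + 1)) :=
    calc _ ≤ η k * ((1 + ‖u‖) * (‖xt (k + 1)‖ + ‖xt k‖ + 1)) := by
          gcongr
          · exact hit.hη k
          · nlinarith [norm_nonneg u, norm_nonneg (xt k), norm_nonneg (xt (k + 1))]
      _ = _ := by ring
  linarith [hit.objective_le hs k hu]

theorem objective_succ_le {k : ℕ} (hk : 1 ≤ k) :
    P (xt (k + 1)) + f (xt (k + 1)) ≤ P (xt k) + f (xt k)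
      + (L * μ (k - 1) + L * μ k + ν k + η k * (‖xt (k + 1)‖ + ‖xt k‖ + 1)) := by
  have hprev : breg φ gφ (xt k) (x k) ≤ μ (k - 1) := by
    simpa [Nat.sub_add_cancel hk] using hit.hdist (k - 1)
  have hnext := mul_nonneg hs.hLnn
    (hs.breg_nonneg_of_mem_interior (hit.hx (k + 1)).2 (hit.hxt k).2)
  have hη := hit.hη k
  linarith [hit.objective_le hs k (hit.hxt k), mul_le_mul_of_nonneg_left hprev hs.hLnn]

end IBPGIter

end IBPG

/-- **O(1/k) iteration complexity of iBPG at the last iterate** (Theorem 3.1(v)). Under the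
standing assumptions, if `Σ_k k·η_k (‖x̃^{k+1}‖+‖x̃^k‖+1) < ∞`, `Σ_k k·μ_k < ∞`,
`Σ_k k·ν_k < ∞`, and the problem has an optimal solution `x* ∈ dom φ`, then there is `C ≥ 0`
with `F(x̃^k) − F* ≤ C/k` for all `k ≥ 1`, where `F = P + f`. -/
theorem iBPG_last_iteration_complexity
    {E : Type*} [NormedAddCommGroup E] [InnerProductSpace ℝ E] [FiniteDimensional ℝ E]
    (Q domφ domP domf X : Set E) (φ P f : E → ℝ) (gφ gf : E → E) (L : ℝ)
    (hstand : Standing Q domφ domP domf X φ P f gφ gf L)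
    (η μ ν : ℕ → ℝ) (x xt : ℕ → E)
    (hiter : IBPGIter domφ domP X φ P gφ gf L η μ ν x xt)
    (Fstar : ℝ) (hFstar : IsGLB ((fun u => P u + f u) '' (domP ∩ domf ∩ Q)) Fstar)
    (h1 : Summable (fun k : ℕ => (k : ℝ) * η k * (‖xt (k+1)‖ + ‖xt k‖ + 1)))
    (h2 : Summable (fun k : ℕ => (k : ℝ) * μ k)) (h3 : Summable (fun k : ℕ => (k : ℝ) * ν k))
    (xstar : E) (hxstar : xstar ∈ domP ∩ domφ)
    (hopt : ∀ u ∈ domP ∩ domf ∩ Q, P xstar + f xstar ≤ P u + f u) :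
    ∃ C : ℝ, 0 ≤ C ∧ ∀ k : ℕ, 1 ≤ k →
      (P (xt k) + f (xt k)) - Fstar ≤ C / (k : ℝ) := by
  have hL := hstand.hLnn
  have hFstar_eq : Fstar = P xstar + f xstar := by
    refine hFstar.unique (IsLeast.isGLB ⟨Set.mem_image_of_mem _ ?_, Set.forall_mem_image.2 hopt⟩)
    exact ⟨⟨hxstar.1, hstand.hfdom hxstar.2⟩, hstand.hφQ ▸ subset_closure hxstar.2⟩
  set c : ℕ → ℝ := fun k => η k * (‖xt (k + 1)‖ + ‖xt k‖ + 1)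
  have hc : ∀ k, 0 ≤ c k := fun k => mul_nonneg (hiter.hη k) (by positivity)
  have hcs : Summable fun k : ℕ => (k : ℝ) * c k := by simpa only [c, mul_assoc] using h1
  obtain ⟨C, hC, hrate⟩ := exists_le_div_of_telescoping_of_le_add
    (a := fun k => P (xt k) + f (xt k) - (P xstar + f xstar))
    (b := fun k => L * breg φ gφ xstar (x k))
    (ε := fun k => L * μ k + ν k + (1 + ‖xstar‖) * c k)
    (δ := fun k => L * μ (k - 1) + L * μ k + ν k + c k)
    (fun k => mul_nonneg hL (hstand.breg_nonneg_of_mem_interior (hiter.hx k).2 hxstar.2))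
    (fun k => add_nonneg (add_nonneg (mul_nonneg hL (hiter.hμ k)) (hiter.hν k))
      (mul_nonneg (by positivity) (hc k)))
    (fun k => add_nonneg (add_nonneg (add_nonneg (mul_nonneg hL (hiter.hμ _))
      (mul_nonneg hL (hiter.hμ k))) (hiter.hν k)) (hc k))
    ((((h2.of_nat_mul hiter.hμ).mul_left L).add (h3.of_nat_mul hiter.hν)).add
      ((hcs.of_nat_mul hc).mul_left _))
    (((((h2.nat_mul_comp_pred hiter.hμ).mul_left L).add (h2.mul_left L)).add h3).add hcs
      |>.congr fun k => by ring)
    (fun k => by linarith [hiter.objective_le_of_mem hstand k hxstar])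
    (fun k hk => by linarith [hiter.objective_succ_le hstand hk])
  exact ⟨C, hC, fun k hk => hFstar_eq ▸ hrate k hk⟩
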